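/- arXiv:1211.2982 — 6 statements merged into one kernel-verified Lean document; each statement's English description precedes it below -/
import Mathlib

section
/- (Bondy) If X is a finite set with n elements and F is a minimal separating family of subsets of X (no proper subfamily of F is separating), then |F| ≤ n − 1. -/
/-- A family `F` of subsets of `X` is separating if for every pair of distinct
elements of `X` some member of `F` contains exactly one of them. -/
def SepFam {α : Type*} [DecidableEq α] (F : Finset (Finset α)) (X : Finset α) : Prop :=
  ∀ x ∈ X, ∀ y ∈ X, x ≠ y → ∃ S ∈ F, (x ∈ S ↔ y ∉ S)

lemma bondy_key {α : Type*} [DecidableEq α] (X : Finset α) (hne : X.Nonempty)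
    (F : Finset (Finset α))
    (hess : ∀ S ∈ F, ∃ x ∈ X, ∃ y ∈ X, x ≠ y ∧
      (∀ T ∈ F, T ≠ S → (x ∈ T ↔ y ∈ T)) ∧ ¬ (x ∈ S ↔ y ∈ S)) :
    ∀ G ⊆ F, G.card + 1 ≤ (X.image (fun x => G.filter (x ∈ ·))).card := by
  intro G
  induction G using Finset.induction_on with
  | empty =>
    intro _
    simpa using Finset.card_pos.2 (hne.image (fun x => (∅ : Finset (Finset α)).filter (x ∈ ·)))
  | @insert S G hS ih =>
    intro hsub
    have hGF : G ⊆ F := fun T hT => hsub (Finset.mem_insert_of_mem hT)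
    have hSF : S ∈ F := hsub (Finset.mem_insert_self S G)
    obtain ⟨x, hx, y, hy, hxy, hagree, hdiff⟩ := hess S hSF
    set f : α → Finset (Finset α) := fun x => G.filter (x ∈ ·) with hf
    set f' : α → Finset (Finset α) := fun x => (insert S G).filter (x ∈ ·) with hf'
    have herase : ∀ z, (f' z).erase S = f z := by
      intro z
      ext T
      simp only [hf, hf', Finset.mem_erase, Finset.mem_filter, Finset.mem_insert]
      constructor
      · rintro ⟨hTS, hT | hT, hz⟩
        · exact absurd hT hTS
        · exact ⟨hT, hz⟩
      · rintro ⟨hT, hz⟩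
        exact ⟨fun h => hS (h ▸ hT), Or.inr hT, hz⟩
    have himg : X.image f = (X.image f').image (Finset.erase · S) := by
      rw [Finset.image_image]
      exact Finset.image_congr fun z _ => (herase z).symm
    have hle : (X.image f).card ≤ (X.image f').card := by
      rw [himg]; exact Finset.card_image_le
    have hfxy : f x = f y := by
      simp only [hf]
      apply Finset.filter_congr
      intro T hT
      have := hagree T (hGF hT) (fun h => hS (h ▸ hT))
      simp [this]
    have hf'xy : f' x ≠ f' y := by
      intro h
      apply hdiff
      have hx' : x ∈ S ↔ S ∈ f' x := by
        simp [hf', Finset.mem_insert_self]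
      have hy' : y ∈ S ↔ S ∈ f' y := by
        simp [hf', Finset.mem_insert_self]
      rw [hx', hy', h]
    have hlt : (X.image f).card < (X.image f').card := by
      rcases lt_or_eq_of_le hle with h | h
      · exact h
      · exfalso
        have hinj : Set.InjOn (Finset.erase · S) (X.image f' : Set (Finset (Finset α))) := by
          apply Finset.injOn_of_card_image_eq
          rw [← himg, h]
        exact hf'xy (hinj (Finset.mem_image_of_mem f' hx) (Finset.mem_image_of_mem f' hy)
          (by simp only []; rw [herase, herase, hfxy]))
    have := ih hGF
    have hcard : (insert S G).card = G.card + 1 := Finset.card_insert_of_notMem hS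
    omega

/-- Bondy's theorem: a minimal separating family on an `n`-element set has at
most `n - 1` members. -/
theorem bondy {α : Type*} [DecidableEq α] (X : Finset α) (n : ℕ) (hX : X.card = n)
    (F : Finset (Finset α)) (hsep : SepFam F X)
    (hmin : ∀ F' ⊂ F, ¬ SepFam F' X) : F.card ≤ n - 1 := by
  rcases X.eq_empty_or_nonempty with hXe | hne
  · -- X empty: F must be empty
    have hF : F = ∅ := by
      by_contra hF
      exact hmin ∅ (Finset.ssubset_iff_subset_ne.2 ⟨Finset.empty_subset _, Ne.symm hF⟩)
        (fun x hx => by simp [hXe] at hx)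
    simp [hF]
  · have hess : ∀ S ∈ F, ∃ x ∈ X, ∃ y ∈ X, x ≠ y ∧
        (∀ T ∈ F, T ≠ S → (x ∈ T ↔ y ∈ T)) ∧ ¬ (x ∈ S ↔ y ∈ S) := by
      intro S hS
      have hssub : F.erase S ⊂ F := Finset.erase_ssubset hS
      have hnsep := hmin _ hssub
      simp only [SepFam, not_forall] at hnsep
      obtain ⟨x, hx, y, hy, hxy, hno⟩ := hnsep
      push_neg at hno
      refine ⟨x, hx, y, hy, hxy, ?_, ?_⟩
      · intro T hT hTS
        have := hno T (Finset.mem_erase.2 ⟨hTS, hT⟩)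
        tauto
      · obtain ⟨S', hS', hsep'⟩ := hsep x hx y hy hxy
        have : S' = S := by
          by_contra h
          have := hno S' (Finset.mem_erase.2 ⟨h, hS'⟩)
          tauto
        rw [← this]
        tauto
    have key := bondy_key X hne F hess F (le_refl F)
    have h2 : (X.image (fun x => F.filter (x ∈ ·))).card ≤ X.card := Finset.card_image_le
    omega
end

section
/- Let P be a set of n collinear points p₁, …, pₙ in the plane (in order along the line), and let H be a family of halfplanes such that {H ∩ P : H ∈ H} separates P. Then |H| ≥ n − 1. -/
/-- Points of the plane. -/
abbrev Pt := ℝ × ℝ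

/-- A family `F` of planar sets separates a finite point set `P` if for every
pair of distinct points of `P` some member of `F` contains exactly one of them. -/
def SepPts (F : Finset (Set Pt)) (P : Finset Pt) : Prop :=
  ∀ x ∈ P, ∀ y ∈ P, x ≠ y → ∃ S ∈ F, (x ∈ S ↔ y ∉ S)

/-- A (closed) halfplane. -/
def IsHalfplane (S : Set Pt) : Prop :=
  ∃ u : Pt, ∃ c : ℝ, u ≠ 0 ∧ S = {p : Pt | p.1 * u.1 + p.2 * u.2 ≤ c}

/-- A closed disc of positive radius. -/
def IsClosedDisc (S : Set Pt) : Prop :=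
  ∃ q : Pt, ∃ r : ℝ, 0 < r ∧ S = Metric.closedBall q r

/-- A finite point set is in general position if no three of its points are
collinear. -/
def GenPos (P : Finset Pt) : Prop :=
  ∀ a ∈ P, ∀ b ∈ P, ∀ c ∈ P, a ≠ b → a ≠ c → b ≠ c → ¬ Collinear ℝ ({a, b, c} : Set Pt)

/-- A finite point set is in convex position if each of its points is an
extreme point of the convex hull, i.e. lies outside the hull of the others. -/
def ConvexPos (Q : Finset Pt) : Prop :=
  ∀ q ∈ Q, q ∉ convexHull ℝ (↑(Q.erase q) : Set Pt)

/-- A finite point set lying on a circle. -/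
def OnCircle (P : Finset Pt) : Prop :=
  ∃ q : Pt, ∃ r : ℝ, 0 < r ∧ ∀ x ∈ P, dist x q = r

lemma gap_key {α γ c s₁ s₁' s₂ s₂' : ℝ} (h1 : s₁ < s₁') (hle : s₁' ≤ s₂) (h2 : s₂ < s₂')
    (A : (s₁ * α + γ ≤ c) ↔ ¬(s₁' * α + γ ≤ c))
    (B : (s₂ * α + γ ≤ c) ↔ ¬(s₂' * α + γ ≤ c)) : False := by
  by_cases hA : s₁ * α + γ ≤ c <;> by_cases hB : s₂ * α + γ ≤ c
  · have hA' := A.mp hA; have hB' := B.mp hB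
    push_neg at hA' hB'
    nlinarith
  · have hA' := A.mp hA
    have hB' : s₂' * α + γ ≤ c := by by_contra h; exact hB (B.mpr h)
    push_neg at hA' hB
    nlinarith
  · have hA' : s₁' * α + γ ≤ c := by by_contra h; exact hA (A.mpr h)
    have hB' := B.mp hB
    push_neg at hA hB'
    nlinarith
  · have hA' : s₁' * α + γ ≤ c := by by_contra h; exact hA (A.mpr h)
    have hB' : s₂' * α + γ ≤ c := by by_contra h; exact hB (B.mpr h)
    push_neg at hA hB
    nlinarith


open Classical

/-- Any separating family of halfplanes for `n` collinear points has at least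
`n - 1` members. -/
theorem halfplanes_collinear_lower_bound (n : ℕ) (P : Finset Pt) (hP : P.card = n)
    (hcol : Collinear ℝ (↑P : Set Pt))
    (H : Finset (Set Pt)) (hH : ∀ S ∈ H, IsHalfplane S) (hsep : SepPts H P) :
    n - 1 ≤ H.card := by
  rcases Nat.lt_or_ge n 2 with hn | hn
  · omega
  have hPcard : 1 < P.card := by omega
  have hPne : P.Nonempty := Finset.card_pos.mp (by omega)
  obtain ⟨p₀, hp₀⟩ := hPne
  obtain ⟨v, hv⟩ := (collinear_iff_of_mem (show p₀ ∈ (↑P : Set Pt) from hp₀)).mp hcol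
  -- v ≠ 0
  obtain ⟨q, hq, hqne⟩ := Finset.exists_mem_ne hPcard p₀
  have hvne : v ≠ 0 := by
    rintro rfl
    obtain ⟨cq, hcq⟩ := hv q hq
    simp at hcq
    exact hqne hcq
  -- parameter function
  set t : Pt → ℝ := fun p => if h :  ∃ c : ℝ, p = c • v + p₀ then h.choose else 0 with ht
  have hpt : ∀ p ∈ P, p = t p • v + p₀ := by
    intro p hp
    have h : ∃ c : ℝ, p = c • v + p₀ := hv p hp
    simp only [ht, dif_pos h]
    exact h.choose_spec
  set pt : ℝ → Pt := fun s => s • v + p₀ with hptdef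
  have hptinj : ∀ s s' : ℝ, pt s = pt s' → s = s' := by
    intro s s' h
    have : (s - s') • v = 0 := by
      have := sub_eq_zero.mpr h
      simp only [hptdef] at this
      rw [sub_smul]
      abel_nf
      abel_nf at this
      linear_combination (norm := module) this
    rcases smul_eq_zero.mp this with h' | h'
    · linarith [sub_eq_zero.mp (by exact_mod_cast h')]
    · exact absurd h' hvne
  set T : Finset ℝ := P.image t with hT
  have htinj : Set.InjOn t P := by
    intro a ha b hb hab
    rw [hpt a ha, hpt b hb, hab]
  have hTcard : T.card = n := by rw [hT, Finset.card_image_of_injOn htinj, hP]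
  have hTP : ∀ s ∈ T, pt s ∈ P := by
    intro s hs
    obtain ⟨p, hp, rfl⟩ := Finset.mem_image.mp hs
    have : pt (t p) = p := (hpt p hp).symm
    rw [this]; exact hp
  have hTne : T.Nonempty := Finset.card_pos.mp (by omega)
  set M := T.max' hTne with hM
  set D := T.erase M with hD
  -- successor function
  set succ : ℝ → ℝ := fun s =>
    if h : ((T.filter (fun x => s < x)).Nonempty) then (T.filter (fun x => s < x)).min' h
    else s with hsuccdef
  have hsucc : ∀ s ∈ D, s < succ s ∧ succ s ∈ T ∧ ∀ x ∈ T, s < x → succ s ≤ x := by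
    intro s hs
    have hsT : s ∈ T := Finset.mem_of_mem_erase hs
    have hsM : s ≠ M := Finset.ne_of_mem_erase hs
    have hsltM : s < M := lt_of_le_of_ne (Finset.le_max' T s hsT) hsM
    have hne : ((T.filter (fun x => s < x)).Nonempty) :=
      ⟨M, Finset.mem_filter.mpr ⟨T.max'_mem hTne, hsltM⟩⟩
    have heq : succ s = (T.filter (fun x => s < x)).min' hne := by
      simp only [hsuccdef, dif_pos hne]
    have hmm := Finset.min'_mem (T.filter (fun x => s < x)) hne
    rw [← heq] at hmm
    obtain ⟨h1, h2⟩ := Finset.mem_filter.mp hmm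
    refine ⟨h2, h1, ?_⟩
    intro x hx hsx
    rw [heq]
    exact Finset.min'_le _ x (Finset.mem_filter.mpr ⟨hx, hsx⟩)
  -- choice of separating halfplane for each gap
  set g : ℝ → Set Pt := fun s =>
    if h : ∃ S ∈ H, (pt s ∈ S ↔ pt (succ s) ∉ S) then h.choose else ∅ with hg
  have hgspec : ∀ s ∈ D, g s ∈ H ∧ (pt s ∈ g s ↔ pt (succ s) ∉ g s) := by
    intro s hs
    obtain ⟨h1, h2, _⟩ := hsucc s hs
    have hxne : pt s ≠ pt (succ s) := fun h => absurd (hptinj _ _ h) h1.ne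
    have hex : ∃ S ∈ H, (pt s ∈ S ↔ pt (succ s) ∉ S) :=
      hsep (pt s) (hTP s (Finset.mem_of_mem_erase hs)) (pt (succ s)) (hTP _ h2) hxne
    simp only [hg, dif_pos hex]
    exact hex.choose_spec
  -- injectivity
  have haux : ∀ s₁ ∈ D, ∀ s₂ ∈ D, g s₁ = g s₂ → s₁ < s₂ → False := by
    intro s₁ hs₁ s₂ hs₂ hgeq h12
    obtain ⟨hl1, _, hmin1⟩ := hsucc s₁ hs₁
    obtain ⟨hl2, _, _⟩ := hsucc s₂ hs₂
    have hle : succ s₁ ≤ s₂ := hmin1 s₂ (Finset.mem_of_mem_erase hs₂) h12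
    obtain ⟨hgH, hsep1⟩ := hgspec s₁ hs₁
    obtain ⟨_, hsep2⟩ := hgspec s₂ hs₂
    rw [← hgeq] at hsep2
    obtain ⟨u, c, hu, hSeq⟩ := hH _ hgH
    have hmem : ∀ s : ℝ, (pt s ∈ g s₁) ↔ s * (v.1 * u.1 + v.2 * u.2) + (p₀.1 * u.1 + p₀.2 * u.2) ≤ c := by
      intro s
      rw [hSeq]
      have he : (pt s).1 * u.1 + (pt s).2 * u.2
          = s * (v.1 * u.1 + v.2 * u.2) + (p₀.1 * u.1 + p₀.2 * u.2) := by
        simp only [hptdef, Prod.fst_add, Prod.snd_add, Prod.smul_fst, Prod.smul_snd,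
          smul_eq_mul]
        ring
      simp only [Set.mem_setOf_eq, he]
    rw [hmem, hmem] at hsep1
    rw [hmem, hmem] at hsep2
    exact gap_key hl1 hle hl2 hsep1 hsep2
  have hinj : Set.InjOn g D := by
    intro a ha b hb hab
    by_contra hne
    rcases lt_or_gt_of_ne hne with h | h
    · exact haux a ha b hb hab h
    · exact haux b hb a ha hab.symm h
  have hmaps : ∀ s ∈ D, g s ∈ H := fun s hs => (hgspec s hs).1
  have := Finset.card_le_card_of_injOn g hmaps hinj
  have hDcard : D.card = n - 1 := by
    rw [hD, Finset.card_erase_of_mem (T.max'_mem hTne), hTcard]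
  omega
end

section
/- For any set P of n points in the plane in general position (no three collinear), with n even, there exists a family of n/2 halfplanes that separates P. -/
/-!
Choose `t` so that `x + t y` takes distinct values on the points, and `m` so that the line
`ℓ : x + t y = m` has `n / 2` of them on each side. Among all pairs `q`, `r` on opposite sides of
`ℓ`, take one whose connecting line meets `ℓ` highest. Then every other point lies strictly below
the line `qr` (an edge of the upper convex hull crossing `ℓ`), so some halfplane contains exactly
`q` and `r` among the points. Discarding `q` and `r` keeps `ℓ` balanced, and repeating yields
`n / 2 - 1` halfplanes. Points on opposite sides of `ℓ` are separated by a halfplane bounded by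
`ℓ`; two points on the same side are separated by the halfplane of the round in which the first
of them is discarded.
-/

open Finset

/-- Positive iff `p` lies strictly to the left of the directed line `q → r`. -/
def orient (q r p : Pt) : ℝ := (r.1 - q.1) * (p.2 - q.2) - (r.2 - q.2) * (p.1 - q.1)

lemma collinear_of_orient_eq_zero {p q r : Pt} (h : orient q r p = 0) :
    Collinear ℝ ({p, q, r} : Set Pt) := by
  rcases eq_or_ne q r with rfl | hqr
  · simpa using collinear_pair ℝ p q
  rw [collinear_iff_of_mem (p₀ := q) (by simp)]
  refine ⟨r - q, ?_⟩
  simp only [Set.mem_insert_iff, Set.mem_singleton_iff, forall_eq_or_imp, forall_eq]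
  refine ⟨?_, ⟨0, by simp⟩, ⟨1, by simp⟩⟩
  simp only [vadd_eq_add, Prod.ext_iff, Prod.fst_add, Prod.smul_fst, Prod.fst_sub, smul_eq_mul,
    Prod.snd_add, Prod.smul_snd, Prod.snd_sub]
  unfold orient at h
  rcases eq_or_ne r.1 q.1 with h1 | h1
  · have h2 : r.2 - q.2 ≠ 0 := sub_ne_zero.mpr fun h2 => hqr (Prod.ext h1 h2).symm
    have hp1 : p.1 = q.1 := by
      rw [h1, sub_self, zero_mul, zero_sub, neg_eq_zero] at h
      linarith [(mul_eq_zero.mp h).resolve_left h2]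
    refine ⟨(p.2 - q.2) / (r.2 - q.2), ?_, ?_⟩ <;> field_simp
    · rw [h1, hp1]; ring
    · ring
  · have h1 : r.1 - q.1 ≠ 0 := sub_ne_zero.mpr h1
    refine ⟨(p.1 - q.1) / (r.1 - q.1), ?_, ?_⟩ <;> field_simp
    · ring
    · linear_combination h

lemma GenPos.orient_ne_zero {S : Finset Pt} (hS : GenPos S) {p q r : Pt} (hp : p ∈ S) (hq : q ∈ S)
    (hr : r ∈ S) (hpq : p ≠ q) (hpr : p ≠ r) (hqr : q ≠ r) : orient q r p ≠ 0 :=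
  fun h => hS p hp q hq r hr hpq hpr hqr (collinear_of_orient_eq_zero h)

lemma GenPos.mono {P Q : Finset Pt} (hP : GenPos P) (hQP : Q ⊆ P) : GenPos Q :=
  fun a ha b hb c hc => hP a (hQP ha) b (hQP hb) c (hQP hc)

lemma isHalfplane_setOf_orient_nonneg {q r : Pt} (hqr : q ≠ r) :
    IsHalfplane {p | 0 ≤ orient q r p} := by
  refine ⟨(r.2 - q.2, q.1 - r.1), q.1 * (r.2 - q.2) + q.2 * (q.1 - r.1), ?_, ?_⟩
  · intro h
    obtain ⟨h1, h2⟩ := Prod.mk_eq_zero.mp h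
    exact hqr (Prod.ext (by linarith) (by linarith))
  · ext p
    simp only [Set.mem_ofPred_eq, orient]
    constructor <;> intro h <;> linarith

def xShear (t : ℝ) (p : Pt) : ℝ := p.1 + t * p.2

lemma isHalfplane_setOf_xShear_le (t m : ℝ) : IsHalfplane {p | xShear t p ≤ m} :=
  ⟨(1, t), m, by simp, by ext p; simp [xShear, mul_comm]⟩

/-- The ordinate of the point where the line `ab` meets the line `xShear t = m`. -/
noncomputable def crossHeight (t m : ℝ) (a b : Pt) : ℝ :=
  (a.2 * (xShear t b - m) + b.2 * (m - xShear t a)) / (xShear t b - xShear t a)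

lemma SepPts.insert_of_inter_eq_pair {F : Finset (Set Pt)} {P : Finset Pt} {H : Set Pt}
    {q r : Pt} (hF : SepPts F ((P.erase q).erase r)) (hqr : ∃ S ∈ F, (q ∈ S ↔ r ∉ S))
    (hH : ∀ p ∈ P, p ∈ H ↔ p = q ∨ p = r) : SepPts (insert H F) P := by
  intro x hx y hy hxy
  by_cases hxqr : x = q ∨ x = r <;> by_cases hyqr : y = q ∨ y = r
  · obtain ⟨S, hS, hsep⟩ := hqr
    refine ⟨S, mem_insert_of_mem hS, ?_⟩
    rcases hxqr with rfl | rfl <;> rcases hyqr with rfl | rfl <;> tauto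
  · exact ⟨H, mem_insert_self _ _, by simp [hH x hx, hH y hy, hxqr, hyqr]⟩
  · exact ⟨H, mem_insert_self _ _, by simp [hH x hx, hH y hy, hxqr, hyqr]⟩
  · push Not at hxqr hyqr
    obtain ⟨S, hS, hsep⟩ := hF x (by simp [*]) y (by simp [*]) hxy
    exact ⟨S, mem_insert_of_mem hS, hsep⟩

section Crossing

variable {t m : ℝ} {p q r : Pt}

lemma orient_nonpos_of_crossHeight_le_left (hp : xShear t p < m) (hq : xShear t q < m)
    (hr : m < xShear t r) (h : crossHeight t m p r ≤ crossHeight t m q r) :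
    orient q r p ≤ 0 := by
  have hpr : xShear t r - xShear t p ≠ 0 := by linarith
  have hqr : xShear t r - xShear t q ≠ 0 := by linarith
  have key : (crossHeight t m p r - crossHeight t m q r) * (xShear t r - xShear t p) *
      (xShear t r - xShear t q) = (xShear t r - m) * orient q r p := by
    unfold crossHeight
    field_simp
    simp only [xShear, orient]
    ring
  refine nonpos_of_mul_nonpos_right (key ▸ ?_) (sub_pos.mpr hr)
  exact mul_nonpos_of_nonpos_of_nonneg (mul_nonpos_of_nonpos_of_nonneg (sub_nonpos.mpr h)
    (by linarith)) (by linarith)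

lemma orient_nonpos_of_crossHeight_le_right (hp : m < xShear t p) (hq : xShear t q < m)
    (hr : m < xShear t r) (h : crossHeight t m q p ≤ crossHeight t m q r) :
    orient q r p ≤ 0 := by
  have hpq : xShear t p - xShear t q ≠ 0 := by linarith
  have hrq : xShear t r - xShear t q ≠ 0 := by linarith
  have key : (crossHeight t m q p - crossHeight t m q r) * (xShear t p - xShear t q) *
      (xShear t r - xShear t q) = (m - xShear t q) * orient q r p := by
    unfold crossHeight
    field_simp
    simp only [xShear, orient]
    ring
  refine nonpos_of_mul_nonpos_right (key ▸ ?_) (sub_pos.mpr hq)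
  exact mul_nonpos_of_nonpos_of_nonneg (mul_nonpos_of_nonpos_of_nonneg (sub_nonpos.mpr h)
    (by linarith)) (by linarith)

lemma exists_halfplane_inter_eq_crossing_pair {S : Finset Pt} (hS : GenPos S)
    (hm : ∀ p ∈ S, xShear t p ≠ m) (hA : (S.filter (xShear t · < m)).Nonempty)
    (hB : (S.filter (m < xShear t ·)).Nonempty) :
    ∃ q ∈ S, ∃ r ∈ S, xShear t q < m ∧ m < xShear t r ∧
      ∃ H, IsHalfplane H ∧ ∀ p ∈ S, p ∈ H ↔ p = q ∨ p = r := by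
  obtain ⟨⟨q, r⟩, hqr, hmax⟩ :=
    exists_max_image _ (fun z : Pt × Pt => crossHeight t m z.1 z.2) (hA.product hB)
  simp only [mem_product, mem_filter] at hqr hmax
  obtain ⟨⟨hq, hqm⟩, hr, hrm⟩ := hqr
  have hne : q ≠ r := by rintro rfl; linarith
  -- the line `qr` meets `xShear t = m` highest among crossing pairs, so no point lies above it
  have below : ∀ p ∈ S, p ≠ q → p ≠ r → orient q r p < 0 := by
    intro p hp hpq hpr
    refine lt_of_le_of_ne ?_ (hS.orient_ne_zero hp hq hr hpq hpr hne)
    rcases (hm p hp).lt_or_gt with hpm | hpm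
    · exact orient_nonpos_of_crossHeight_le_left hpm hqm hrm (hmax (p, r) ⟨⟨hp, hpm⟩, hr, hrm⟩)
    · exact orient_nonpos_of_crossHeight_le_right hpm hqm hrm (hmax (q, p) ⟨⟨hq, hqm⟩, hp, hpm⟩)
  refine ⟨q, hq, r, hr, hqm, hrm, _, isHalfplane_setOf_orient_nonneg hne, fun p hp => ?_⟩
  by_cases hpqr : p = q ∨ p = r
  · rcases hpqr with rfl | rfl <;> simp [orient, mul_comm]
  · push Not at hpqr
    simpa [hpqr] using below p hp hpqr.1 hpqr.2

lemma sepPts_singleton_of_card_sides_le_one {S : Finset Pt} (hm : ∀ p ∈ S, xShear t p ≠ m)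
    (hA : #(S.filter (xShear t · < m)) ≤ 1) (hB : #(S.filter (m < xShear t ·)) ≤ 1) :
    SepPts {{p | xShear t p ≤ m}} S := by
  intro x hx y hy hxy
  refine ⟨_, mem_singleton_self _, ?_⟩
  simp only [Set.mem_ofPred_eq, not_le]
  rcases (hm x hx).lt_or_gt with hxm | hxm <;> rcases (hm y hy).lt_or_gt with hym | hym
  · exact absurd (card_le_one.mp hA x (by simp [hx, hxm]) y (by simp [hy, hym])) hxy
  · exact iff_of_true hxm.le hym
  · exact iff_of_false hxm.not_ge (not_lt.mpr hym.le)
  · exact absurd (card_le_one.mp hB x (by simp [hx, hxm]) y (by simp [hy, hym])) hxy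

lemma exists_halfplanes_sepPts_of_card_sides_eq {j : ℕ} (hj : 1 ≤ j) {S : Finset Pt}
    (hS : GenPos S) (hm : ∀ p ∈ S, xShear t p ≠ m) (hA : #(S.filter (xShear t · < m)) = j)
    (hB : #(S.filter (m < xShear t ·)) = j) :
    ∃ F : Finset (Set Pt), #F ≤ j - 1 ∧ (∀ H ∈ F, IsHalfplane H) ∧
      SepPts (insert {p | xShear t p ≤ m} F) S := by
  induction j, hj using Nat.le_induction generalizing S with
  | base => exact ⟨∅, by simp, by simp, sepPts_singleton_of_card_sides_le_one hm hA.le hB.le⟩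
  | succ j hj ih =>
    obtain ⟨q, hq, r, hr, hqm, hrm, H, hH, hHS⟩ := exists_halfplane_inter_eq_crossing_pair hS hm
      (card_pos.mp (by omega)) (card_pos.mp (by omega))
    have hA' : #(((S.erase q).erase r).filter (xShear t · < m)) = j := by
      rw [filter_erase, filter_erase, erase_eq_of_notMem (by simp [hrm.le]),
        card_erase_of_mem (by simp [hq, hqm]), hA, Nat.add_sub_cancel]
    have hrq : r ≠ q := by rintro rfl; linarith
    have hB' : #(((S.erase q).erase r).filter (m < xShear t ·)) = j := by
      rw [filter_erase, filter_erase, card_erase_of_mem (by simp [hr, hrm, hrq]),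
        erase_eq_of_notMem (by simp [hqm.le]), hB, Nat.add_sub_cancel]
    have hsub : (S.erase q).erase r ⊆ S := (erase_subset _ _).trans (erase_subset _ _)
    obtain ⟨F, hF, hFH, hsep⟩ := ih (hS.mono hsub) (fun p hp => hm p (hsub hp)) hA' hB'
    refine ⟨insert H F, (card_insert_le _ _).trans (by omega),
      (forall_mem_insert _ _ _).mpr ⟨hH, hFH⟩, ?_⟩
    rw [insert_comm]
    exact hsep.insert_of_inter_eq_pair ⟨_, mem_insert_self _ _, by simp [hqm.le, hrm]⟩ hHS

end Crossing

lemma exists_card_filter_lt_eq (Q : Finset ℝ) {k : ℕ} (hk : k < #Q) :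
    ∃ x ∈ Q, #(Q.filter (· < x)) = k := by
  have hmono : StrictMonoOn (fun x => #(Q.filter (· < x))) Q := fun a ha b hb hab =>
    card_lt_card ((ssubset_iff_of_subset (monotone_filter_right _ fun _ _ h => h.trans hab)).mpr
      ⟨a, mem_filter.mpr ⟨ha, hab⟩, by simp⟩)
  have hmaps : Set.MapsTo (fun x => #(Q.filter (· < x))) Q (range #Q) := fun x hx =>
    mem_range.mpr (card_lt_card (filter_ssubset.mpr ⟨x, hx, lt_irrefl x⟩))
  exact surjOn_of_injOn_of_card_le _ hmaps hmono.injOn (by simp) (mem_range.mpr hk)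

lemma exists_notMem_card_filter_lt_eq_card_filter_gt_eq (Q : Finset ℝ) {k : ℕ} (hk : 0 < k)
    (hQ : #Q = k + k) : ∃ m ∉ Q, #(Q.filter (· < m)) = k ∧ #(Q.filter (m < ·)) = k := by
  obtain ⟨x, hx, hxk⟩ := exists_card_filter_lt_eq Q (k := k) (by omega)
  have hL : (Q.filter (· < x)).Nonempty := card_pos.mp (hxk ▸ hk)
  set a := (Q.filter (· < x)).max' hL
  have hax : a < x := (mem_filter.mp ((Q.filter (· < x)).max'_mem hL)).2
  set m := (a + x) / 2 with hm
  have hlt : ∀ y ∈ Q, y < m ↔ y < x := fun y hy =>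
    ⟨fun h => h.trans (by linarith), fun h =>
      ((Q.filter (· < x)).le_max' y (mem_filter.mpr ⟨hy, h⟩)).trans_lt (by linarith)⟩
  have hmQ : m ∉ Q := fun h => lt_irrefl m ((hlt m h).mpr (by linarith))
  have hbelow : Q.filter (· < m) = Q.filter (· < x) := filter_congr hlt
  refine ⟨m, hmQ, hbelow ▸ hxk, ?_⟩
  have habove : Q.filter (m < ·) = Q.filter (¬ · < m) :=
    filter_congr fun y hy => by
      rw [not_lt, le_iff_lt_or_eq, or_iff_left (ne_of_mem_of_not_mem hy hmQ).symm]
  have := card_filter_add_card_filter_not (s := Q) (· < m)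
  rw [← habove, hbelow, hxk, hQ] at this
  omega

lemma exists_injOn_xShear (P : Finset Pt) : ∃ t, Set.InjOn (xShear t) P := by
  obtain ⟨t, ht⟩ := Infinite.exists_notMem_finset
    ((P ×ˢ P).image fun z : Pt × Pt => -(z.1.1 - z.2.1) / (z.1.2 - z.2.2))
  refine ⟨t, fun p hp q hq hpq => ?_⟩
  unfold xShear at hpq
  by_contra hne
  rcases eq_or_ne p.2 q.2 with h2 | h2
  · exact hne (Prod.ext (by rw [h2] at hpq; linarith) h2)
  · have h2 : p.2 - q.2 ≠ 0 := sub_ne_zero.mpr h2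
    refine ht (mem_image.mpr ⟨(p, q), mem_product.mpr ⟨hp, hq⟩, ?_⟩)
    field_simp
    linarith

/-- Any set of `n` points in general position (`n` even) can be separated by
`n / 2` halfplanes. -/
theorem halfplanes_general_position_upper_bound (n : ℕ) (hn : Even n)
    (P : Finset Pt) (hP : P.card = n) (hgp : GenPos P) :
    ∃ H : Finset (Set Pt), H.card ≤ n / 2 ∧ (∀ S ∈ H, IsHalfplane S) ∧ SepPts H P := by
  obtain ⟨k, rfl⟩ := hn
  rcases k.eq_zero_or_pos with rfl | hk
  · exact ⟨∅, by simp, by simp, by simp_all [SepPts]⟩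
  obtain ⟨t, ht⟩ := exists_injOn_xShear P
  obtain ⟨m, hmP, hA, hB⟩ := exists_notMem_card_filter_lt_eq_card_filter_gt_eq
    (P.image (xShear t)) hk (by rw [card_image_of_injOn ht, hP])
  rw [filter_image, card_image_of_injOn (ht.mono (filter_subset _ _))] at hA hB
  obtain ⟨F, hF, hFH, hsep⟩ := exists_halfplanes_sepPts_of_card_sides_eq hk hgp
    (fun p hp h => hmP (mem_image.mpr ⟨p, hp, h⟩)) hA hB
  refine ⟨insert {p | xShear t p ≤ m} F, (card_insert_le _ _).trans (by omega),
    (forall_mem_insert _ _ _).mpr ⟨isHalfplane_setOf_xShear_le t m, hFH⟩, hsep⟩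
end

section
/- If Q is a set of k points in convex position in the plane, then there exists a family of at most ⌈log₂ k⌉ convex sets that separates Q. -/
/-- `k` points in convex position can be separated by at most `⌈log₂ k⌉` convex
sets. -/
theorem convex_position_separating_clog (k : ℕ) (Q : Finset Pt) (hQ : Q.card = k)
    (hconv : ConvexPos Q) :
    ∃ F : Finset (Set Pt), F.card ≤ Nat.clog 2 k ∧ (∀ S ∈ F, Convex ℝ S) ∧ SepPts F Q := by
  classical
  -- index of each point of `Q`
  set e := Q.equivFin with he
  set idx : Pt → ℕ := fun p => if h : p ∈ Q then (e ⟨p, h⟩ : ℕ) else 0 with hidx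
  have hidx_lt : ∀ p ∈ Q, idx p < k := by
    intro p hp
    simp only [hidx, dif_pos hp]
    exact hQ ▸ (e ⟨p, hp⟩).isLt
  have hidx_inj : ∀ p ∈ Q, ∀ q ∈ Q, idx p = idx q → p = q := by
    intro p hp q hq h
    simp only [hidx, dif_pos hp, dif_pos hq] at h
    have := e.injective (Fin.val_injective h)
    exact congrArg Subtype.val this
  -- the convex sets
  set S : ℕ → Set Pt := fun i =>
    convexHull ℝ {p : Pt | p ∈ Q ∧ (idx p).testBit i} with hS
  have hmem : ∀ i, ∀ q ∈ Q, q ∈ S i ↔ (idx q).testBit i := by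
    intro i q hq
    constructor
    · intro hmem
      by_contra hbit
      apply hconv q hq
      refine convexHull_mono ?_ hmem
      intro p hp
      rcases hp with ⟨hpQ, hpbit⟩
      have : p ≠ q := by
        intro h; subst h; exact hbit hpbit
      exact Finset.mem_coe.mpr (Finset.mem_erase.mpr ⟨this, hpQ⟩)
    · intro hbit
      exact subset_convexHull ℝ _ ⟨hq, hbit⟩
  refine ⟨(Finset.range (Nat.clog 2 k)).image S, ?_, ?_, ?_⟩
  · exact (Finset.card_image_le).trans (by simp)
  · intro T hT
    rcases Finset.mem_image.mp hT with ⟨i, _, rfl⟩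
    exact convex_convexHull ℝ _
  · intro x hx y hy hxy
    have hne : idx x ≠ idx y := fun h => hxy (hidx_inj x hx y hy h)
    obtain ⟨i, hi⟩ : ∃ i, (idx x).testBit i ≠ (idx y).testBit i := by
      by_contra h
      push_neg at h
      exact hne (Nat.eq_of_testBit_eq h)
    have hk2 : 1 < 2 := one_lt_two
    have hlt : ∀ p ∈ Q, idx p < 2 ^ Nat.clog 2 k := fun p hp =>
      lt_of_lt_of_le (hidx_lt p hp) (Nat.le_pow_clog hk2 k)
    have hi_lt : i < Nat.clog 2 k := by
      by_contra hge
      push_neg at hge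
      have hx' : (idx x).testBit i = false :=
        Nat.testBit_eq_false_of_lt (lt_of_lt_of_le (hlt x hx)
          (Nat.pow_le_pow_right (by norm_num) hge))
      have hy' : (idx y).testBit i = false :=
        Nat.testBit_eq_false_of_lt (lt_of_lt_of_le (hlt y hy)
          (Nat.pow_le_pow_right (by norm_num) hge))
      exact hi (hx'.trans hy'.symm)
    refine ⟨S i, Finset.mem_image.mpr ⟨i, Finset.mem_range.mpr hi_lt, rfl⟩, ?_⟩
    rw [hmem i x hx, hmem i y hy]
    rcases Bool.eq_false_or_eq_true ((idx x).testBit i) with h | h <;>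
      simp [h] <;> simpa [h] using hi.symm ∘ Eq.symm
end

section
/- Let γ be a Jordan curve, k a positive integer, and A a family of planar sets each bounded by a closed Jordan curve and each intersecting γ in at most k intervals (arcs). Then for any n points on γ, any subfamily of A separating these points has cardinality at least (n − 1)/(2k). -/
open Finset

theorem Function.Periodic.comp_fract {α β : Type*} [Ring α] [LinearOrder α]
    [IsStrictOrderedRing α] [FloorRing α] {f : α → β} (hf : Function.Periodic f 1) :
    f ∘ Int.fract = f := by
  ext x
  simpa only [Function.comp_apply, Int.fract, mul_one] using hf.sub_int_mul_eq (x := x) ⌊x⌋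

/-- The arc of `ℝ/ℤ` swept by `[a, b]`, as a subset of the fundamental domain `[0, 1)`. -/
def circleArc (a b : ℝ) : Set ℝ := Int.fract '' Set.Icc a b

lemma fract_left_mem_Ioc_of_notMem_of_mem {a b x y : ℝ} (hx : 0 ≤ x) (hxy : x ≤ y) (hy : y < 1)
    (hxC : x ∉ circleArc a b) (hyC : y ∈ circleArc a b) :
    Int.fract a ∈ Set.Ioc x y := by
  obtain ⟨s, ⟨has, hsb⟩, rfl⟩ := hyC
  rw [← Int.self_sub_floor] at hxy hy ⊢
  by_cases hax : a - ⌊s⌋ ≤ x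
  · refine absurd ⟨x + ⌊s⌋, ⟨by linarith, by linarith⟩, ?_⟩ hxC
    rw [Int.fract_add_intCast, Int.fract_eq_self.2 ⟨hx, by linarith⟩]
  · rw [← Int.fract_sub_intCast a ⌊s⌋, Int.fract_eq_self.2 ⟨by linarith, by linarith⟩]
    exact ⟨lt_of_not_ge hax, by linarith⟩

lemma fract_right_mem_Ico_of_mem_of_notMem {a b x y : ℝ} (hx : 0 ≤ x) (hxy : x ≤ y) (hy : y < 1)
    (hxC : x ∈ circleArc a b) (hyC : y ∉ circleArc a b) :
    Int.fract b ∈ Set.Ico x y := by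
  obtain ⟨s, ⟨has, hsb⟩, rfl⟩ := hxC
  rw [← Int.self_sub_floor] at hx hxy ⊢
  by_cases hyb : y ≤ b - ⌊s⌋
  · refine absurd ⟨y + ⌊s⌋, ⟨by linarith, by linarith⟩, ?_⟩ hyC
    rw [Int.fract_add_intCast, Int.fract_eq_self.2 ⟨by linarith, hy⟩]
  · rw [← Int.fract_sub_intCast b ⌊s⌋, Int.fract_eq_self.2 ⟨by linarith, by linarith⟩]
    exact ⟨by linarith, lt_of_not_ge hyb⟩

open Classical in
lemma card_filter_separated_iUnion_le {ι κ α : Type*} [Fintype ι] [Fintype κ] (x y : ι → α)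
    (C : κ → Set α) :
    #{j | x j ∈ ⋃ l, C l ↔ y j ∉ ⋃ l, C l} ≤ ∑ l, #{j | x j ∈ C l ↔ y j ∉ C l} := by
  refine (card_le_card fun j hj => ?_).trans card_biUnion_le
  simp only [mem_filter, mem_univ, true_and, Set.mem_iUnion, mem_biUnion] at hj ⊢
  by_cases hx : ∃ l, x j ∈ C l
  · obtain ⟨l, hl⟩ := hx
    exact ⟨l, iff_of_true hl fun h => hj.1 ⟨l, hl⟩ ⟨l, h⟩⟩
  · obtain ⟨l, hl⟩ := not_not.1 fun h => hx (hj.2 h)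
    exact ⟨l, iff_of_false (fun h => hx ⟨l, h⟩) (not_not.2 hl)⟩

section Consecutive

variable {m : ℕ} {u : Fin (m + 1) → ℝ}

lemma Monotone.disjoint_Ioc_castSucc_succ (hu : Monotone u) {i j : Fin m} (hij : i ≠ j) :
    Disjoint (Set.Ioc (u i.castSucc) (u i.succ)) (Set.Ioc (u j.castSucc) (u j.succ)) := by
  simpa only [Function.onFun, Fin.orderSucc_castSucc] using
    hu.pairwise_disjoint_on_Ioc_succ (Fin.castSucc_injective m |>.ne hij)

lemma Monotone.disjoint_Ico_castSucc_succ (hu : Monotone u) {i j : Fin m} (hij : i ≠ j) :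
    Disjoint (Set.Ico (u i.castSucc) (u i.succ)) (Set.Ico (u j.castSucc) (u j.succ)) := by
  simpa only [Function.onFun, Fin.orderSucc_castSucc] using
    hu.pairwise_disjoint_on_Ico_succ (Fin.castSucc_injective m |>.ne hij)

variable (hu : Monotone u) (hu01 : ∀ i, u i ∈ Set.Ico (0 : ℝ) 1) (a b : ℝ)
include hu hu01

open Classical in
lemma card_filter_enter_arc_le_one :
    #{j : Fin m | u j.castSucc ∉ circleArc a b ∧ u j.succ ∈ circleArc a b} ≤ 1 := by
  refine card_le_one.2 fun i hi j hj => ?_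
  simp only [mem_filter, mem_univ, true_and] at hi hj
  by_contra hij
  have hle : ∀ j : Fin m, u j.castSucc ≤ u j.succ := fun j => hu (Fin.castSucc_le_succ j)
  exact Set.disjoint_left.1 (hu.disjoint_Ioc_castSucc_succ hij)
    (fract_left_mem_Ioc_of_notMem_of_mem (hu01 _).1 (hle i) (hu01 _).2 hi.1 hi.2)
    (fract_left_mem_Ioc_of_notMem_of_mem (hu01 _).1 (hle j) (hu01 _).2 hj.1 hj.2)

open Classical in
lemma card_filter_leave_arc_le_one :
    #{j : Fin m | u j.castSucc ∈ circleArc a b ∧ u j.succ ∉ circleArc a b} ≤ 1 := by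
  refine card_le_one.2 fun i hi j hj => ?_
  simp only [mem_filter, mem_univ, true_and] at hi hj
  by_contra hij
  have hle : ∀ j : Fin m, u j.castSucc ≤ u j.succ := fun j => hu (Fin.castSucc_le_succ j)
  exact Set.disjoint_left.1 (hu.disjoint_Ico_castSucc_succ hij)
    (fract_right_mem_Ico_of_mem_of_notMem (hu01 _).1 (hle i) (hu01 _).2 hi.1 hi.2)
    (fract_right_mem_Ico_of_mem_of_notMem (hu01 _).1 (hle j) (hu01 _).2 hj.1 hj.2)

open Classical in
lemma card_filter_separated_arc_le_two :
    #{j : Fin m | u j.castSucc ∈ circleArc a b ↔ u j.succ ∉ circleArc a b} ≤ 2 := by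
  calc _ ≤ #(({j | u j.castSucc ∉ circleArc a b ∧ u j.succ ∈ circleArc a b} : Finset (Fin m)) ∪
            ({j | u j.castSucc ∈ circleArc a b ∧ u j.succ ∉ circleArc a b} : Finset (Fin m))) := by
        refine card_le_card fun j hj => ?_
        simp only [mem_filter, mem_univ, true_and, mem_union] at hj ⊢
        tauto
    _ ≤ 1 + 1 := (card_union_le _ _).trans <| add_le_add
        (card_filter_enter_arc_le_one hu hu01 a b) (card_filter_leave_arc_le_one hu hu01 a b)

end Consecutive

open Classical in
lemma card_filter_separated_circleArcs_le {m k : ℕ} {u : Fin (m + 1) → ℝ} (hu : Monotone u)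
    (hu01 : ∀ i, u i ∈ Set.Ico (0 : ℝ) 1) (a b : Fin k → ℝ) :
    #{j : Fin m | u j.castSucc ∈ ⋃ l, circleArc (a l) (b l) ↔
      u j.succ ∉ ⋃ l, circleArc (a l) (b l)} ≤ 2 * k :=
  calc _ ≤ ∑ l, #{j : Fin m | u j.castSucc ∈ circleArc (a l) (b l) ↔
              u j.succ ∉ circleArc (a l) (b l)} :=
        card_filter_separated_iUnion_le _ _ _
    _ ≤ ∑ _l : Fin k, 2 := sum_le_sum fun l _ => card_filter_separated_arc_le_two hu hu01 _ _
    _ = 2 * k := by simp [mul_comm]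

lemma mem_iff_mem_iUnion_circleArc {X ι : Type*} {f : ℝ → X} (hper : Function.Periodic f 1)
    (hinj : Set.InjOn f (Set.Ico 0 1)) {A : Set X} {a b : ι → ℝ}
    (hA : A ∩ f '' Set.Ico 0 1 = ⋃ l, f '' Set.Icc (a l) (b l)) {t : ℝ}
    (ht : t ∈ Set.Ico (0 : ℝ) 1) :
    f t ∈ A ↔ t ∈ ⋃ l, circleArc (a l) (b l) := by
  have harcs : f '' ⋃ l, circleArc (a l) (b l) = A ∩ f '' Set.Ico 0 1 := by
    simp only [hA, Set.image_iUnion, circleArc, Set.image_image, ← Function.comp_apply (f := f),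
      hper.comp_fract]
  have hsub : ⋃ l, circleArc (a l) (b l) ⊆ Set.Ico 0 1 := by
    simp only [Set.iUnion_subset_iff, circleArc, Set.image_subset_iff]
    exact fun l s _ => ⟨Int.fract_nonneg s, Int.fract_lt_one s⟩
  rw [← hinj.mem_image_iff hsub ht, harcs]
  exact (and_iff_left (Set.mem_image_of_mem f ht)).symm

theorem jordan_arcs_lower_bound_general (γ : Set Pt) (f : ℝ → Pt)
    (hper : Function.Periodic f 1) (hinjf : Set.InjOn f (Set.Ico 0 1))
    (hγ : γ = f '' Set.Ico 0 1)
    (k : ℕ) (n : ℕ) (p : Fin n → Pt)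
    (hpγ : ∀ i, p i ∈ γ)
    (F : Finset (Set Pt))
    (harcs : ∀ A ∈ F, ∃ a b : Fin k → ℝ, A ∩ γ = ⋃ i, f '' Set.Icc (a i) (b i))
    (hsep : ∀ i j : Fin n, i ≠ j → ∃ S ∈ F, (p i ∈ S ↔ p j ∉ S)) :
    ((n : ℝ) - 1) / (2 * k) ≤ F.card := by
  classical
  subst hγ
  obtain _ | m := n
  · exact (div_nonpos_of_nonpos_of_nonneg (by norm_num) (by positivity)).trans (Nat.cast_nonneg _)
  choose t ht hft using hpγ
  set σ := Tuple.sort t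
  choose S hSF hSsep using fun j : Fin m =>
    hsep (σ j.castSucc) (σ j.succ) (σ.injective.ne (Fin.castSucc_lt_succ (i := j)).ne)
  have hfiber : ∀ A ∈ F, #{j | S j = A} ≤ 2 * k := by
    intro A hA
    obtain ⟨a, b, hab⟩ := harcs A hA
    have hmem : ∀ i, p (σ i) ∈ A ↔ (t ∘ σ) i ∈ ⋃ l, circleArc (a l) (b l) := fun i =>
      hft (σ i) ▸ mem_iff_mem_iUnion_circleArc hper hinjf hab (ht (σ i))
    refine (card_le_card fun j hj => ?_).trans
      (card_filter_separated_circleArcs_le (Tuple.monotone_sort t) (fun i => ht (σ i)) a b)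
    simp only [mem_filter, mem_univ, true_and] at hj ⊢
    rw [← hmem, ← hmem, ← hj]
    exact hSsep j
  have hcard : m ≤ 2 * k * #F := by
    simpa using card_le_mul_card_image_of_maps_to (s := univ) (fun j _ => hSF j) (2 * k) hfiber
  refine div_le_of_le_mul₀ (by positivity) (Nat.cast_nonneg _) ?_
  rw [Nat.cast_succ, add_sub_cancel_right]
  exact_mod_cast (mul_comm (2 * k) _ ▸ hcard)

/-- If each member of a family meets a Jordan curve `γ` in at most `k` arcs,
then separating `n` points of `γ` requires at least `(n - 1)/(2k)` members. -/
theorem jordan_arcs_lower_bound (γ : Set Pt) (f : ℝ → Pt) (hf : Continuous f)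
    (hper : Function.Periodic f 1) (hinjf : Set.InjOn f (Set.Ico 0 1))
    (hγ : γ = f '' Set.Ico 0 1)
    (k : ℕ) (hk : 0 < k) (n : ℕ) (p : Fin n → Pt) (hpinj : Function.Injective p)
    (hpγ : ∀ i, p i ∈ γ)
    (F : Finset (Set Pt))
    (harcs : ∀ A ∈ F, ∃ a b : Fin k → ℝ, A ∩ γ = ⋃ i, f '' Set.Icc (a i) (b i))
    (hsep : ∀ i j : Fin n, i ≠ j → ∃ S ∈ F, (p i ∈ S ↔ p j ∉ S)) :
    ((n : ℝ) - 1) / (2 * k) ≤ F.card :=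
  jordan_arcs_lower_bound_general γ f hper hinjf hγ k n p hpγ F harcs hsep
end

section
/- For any family F of subsets of an n-element set X with n ≥ 2 that is separating, one can extract a minimal separating subfamily F' ⊆ F with ⌈log₂ n⌉ ≤ |F'| ≤ n − 1. -/
open Finset

section

variable {α : Type*} [DecidableEq α]

def incidence (F : Finset (Finset α)) (x : α) : Finset (Finset α) := {S ∈ F | x ∈ S}

lemma incidence_eq_incidence_iff {F : Finset (Finset α)} {x y : α} :
    incidence F x = incidence F y ↔ ∀ S ∈ F, (x ∈ S ↔ y ∈ S) := by
  simp only [incidence, Finset.ext_iff, mem_filter]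
  grind

lemma sepFam_iff_injOn_incidence {F : Finset (Finset α)} {X : Finset α} :
    SepFam F X ↔ Set.InjOn (incidence F) X := by
  simp only [SepFam, Set.InjOn, incidence_eq_incidence_iff, mem_coe]
  refine forall₂_congr fun x _ => forall₂_congr fun y _ => ?_
  grind

lemma SepFam.clog_card_le {F : Finset (Finset α)} {X : Finset α} (hsep : SepFam F X) :
    Nat.clog 2 #X ≤ #F := by
  rw [Nat.clog_le_iff_le_pow one_lt_two, ← card_powerset]
  exact card_le_card_of_injOn (incidence F) (fun x _ => mem_powerset.mpr (filter_subset _ _))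
    (sepFam_iff_injOn_incidence.mp hsep)

variable {F G : Finset (Finset α)} {X : Finset α} {T : Finset α}

lemma SepFam.exists_critical_pair (hsep : SepFam F X) (hT : T ∈ F)
    (hess : ¬ SepFam (F.erase T) X) :
    ∃ x ∈ X, ∃ y ∈ X, (x ∈ T ↔ y ∉ T) ∧ ∀ R ∈ F, R ≠ T → (x ∈ R ↔ y ∈ R) := by
  simp only [SepFam, not_forall] at hess
  obtain ⟨x, hx, y, hy, hxy, hno⟩ := hess
  have hother : ∀ R ∈ F, R ≠ T → (x ∈ R ↔ y ∈ R) := fun R hR hRT => by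
    by_contra h
    exact hno ⟨R, mem_erase.mpr ⟨hRT, hR⟩, by tauto⟩
  refine ⟨x, hx, y, hy, ?_, hother⟩
  obtain ⟨S, hS, hSsep⟩ := hsep x hx y hy hxy
  obtain rfl | hST := eq_or_ne S T
  · exact hSsep
  · have := hother S hS hST
    tauto

lemma erase_incidence_insert (hT : T ∉ G) (x : α) :
    (incidence (insert T G) x).erase T = incidence G x := by
  have hTG : T ∉ incidence G x := fun h => hT (mem_filter.mp h).1
  unfold incidence at hTG ⊢
  rw [filter_insert]
  split_ifs
  · exact erase_insert hTG
  · exact erase_eq_of_notMem hTG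

lemma card_image_incidence_lt_insert (hT : T ∉ G) {x y : α} (hx : x ∈ X) (hy : y ∈ X)
    (hxy : incidence G x = incidence G y) (hTsep : x ∈ T ↔ y ∉ T) :
    #(X.image (incidence G)) < #(X.image (incidence (insert T G))) := by
  have himage : X.image (incidence G) = (X.image (incidence (insert T G))).image (·.erase T) := by
    rw [image_image]
    exact image_congr fun z _ => (erase_incidence_insert hT z).symm
  rw [himage]
  refine card_image_le.lt_of_ne fun h => ?_
  have hsplit : incidence (insert T G) x = incidence (insert T G) y :=
    card_image_iff.mp h (mem_image_of_mem _ hx) (mem_image_of_mem _ hy)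
      (by simp only [erase_incidence_insert hT, hxy])
  have hTmem := congrArg (T ∈ ·) hsplit
  simp only [incidence, mem_filter, mem_insert_self, true_and, eq_iff_iff] at hTmem
  tauto

lemma card_add_one_le_card_image_incidence (hsep : SepFam F X)
    (hess : ∀ T ∈ F, ¬ SepFam (F.erase T) X) (hX : X.Nonempty) (hG : G ⊆ F) :
    #G + 1 ≤ #(X.image (incidence G)) := by
  induction G using Finset.induction_on with
  | empty => simpa using hX
  | insert T G hTG ih =>
    have hTF := hG (mem_insert_self T G)
    obtain ⟨x, hx, y, hy, hTsep, hother⟩ := hsep.exists_critical_pair hTF (hess T hTF)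
    have hxy : incidence G x = incidence G y := incidence_eq_incidence_iff.mpr fun R hR =>
      hother R (hG (mem_insert_of_mem hR)) (by rintro rfl; exact hTG hR)
    have hlt := card_image_incidence_lt_insert hTG hx hy hxy hTsep
    have hle := ih ((subset_insert T G).trans hG)
    rw [card_insert_of_notMem hTG]
    omega

theorem SepFam.card_le_card_sub_one (hsep : SepFam F X)
    (hess : ∀ T ∈ F, ¬ SepFam (F.erase T) X) : #F ≤ #X - 1 := by
  obtain rfl | ⟨T, hT⟩ := F.eq_empty_or_nonempty
  · simp
  obtain ⟨x, hx, -⟩ := hsep.exists_critical_pair hT (hess T hT)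
  have := card_add_one_le_card_image_incidence hsep hess ⟨x, hx⟩ subset_rfl
  rw [card_image_of_injOn (sepFam_iff_injOn_incidence.mp hsep)] at this
  omega

end

theorem minimal_separating_subfamily_general {α : Type*} [DecidableEq α]
    (X : Finset α) (n : ℕ) (hX : X.card = n)
    (F : Finset (Finset α)) (hsep : SepFam F X) :
    ∃ F' ⊆ F, SepFam F' X ∧ (∀ F'' ⊂ F', ¬ SepFam F'' X) ∧
      Nat.clog 2 n ≤ F'.card ∧ F'.card ≤ n - 1 := by
  obtain ⟨F', hF'F, hmin⟩ := exists_minimal_le_of_wellFoundedLT (SepFam · X) F hsep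
  have hess : ∀ T ∈ F', ¬ SepFam (F'.erase T) X := fun T hT =>
    hmin.not_prop_of_lt (erase_ssubset hT)
  subst hX
  exact ⟨F', hF'F, hmin.prop, fun _ h => hmin.not_prop_of_lt h, hmin.prop.clog_card_le,
    hmin.prop.card_le_card_sub_one hess⟩

/-- Any separating family on an `n`-element set (`n ≥ 2`) contains a minimal
separating subfamily `F'` with `⌈log₂ n⌉ ≤ |F'| ≤ n - 1`. -/
theorem minimal_separating_subfamily {α : Type*} [DecidableEq α]
    (X : Finset α) (n : ℕ) (hn : 2 ≤ n) (hX : X.card = n)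
    (F : Finset (Finset α)) (hsep : SepFam F X) :
    ∃ F' ⊆ F, SepFam F' X ∧ (∀ F'' ⊂ F', ¬ SepFam F'' X) ∧
      Nat.clog 2 n ≤ F'.card ∧ F'.card ≤ n - 1 :=
  minimal_separating_subfamily_general X n hX F hsep
end
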